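/- Let G be a group acting on a polynomial ring S = R[y_1,...,y_r] with R = ℂ[x_1,...,x_l], generated by (a) lifts σ̂ of automorphisms σ of R fixing each y_j, and (b) R-algebra automorphisms τ with τ(y_t) = y_t + h·y_s (t ≠ s, h ∈ R) fixing the other y_j. Then for any ω ∈ G written as ω = σ̂τ with τ in the subgroup generated by maps of type (b), and any f_1,...,f_r ∈ R with ω(Σ f_j y_j) = Σ g_j y_j, one has σ((f_1,...,f_r)) = (g_1,...,g_r) as ideals of R. -/
import Mathlib

open MvPolynomial

private lemma lin_coeff {l r : ℕ} (c : Fin r → MvPolynomial (Fin l) ℂ) (j : Fin r) :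
    MvPolynomial.coeff (Finsupp.single j 1) (∑ i, C (c i) * X i) = c j := by
  classical
  rw [coeff_sum]
  have : ∀ i : Fin r, coeff (Finsupp.single j 1) (C (c i) * X i) =
      if i = j then c i else 0 := by
    intro i
    rw [coeff_C_mul, coeff_X']
    by_cases h : i = j
    · simp [h]
    · rw [if_neg, mul_zero, if_neg h]
      exact fun hh => h (by simpa using (Finsupp.single_left_injective one_ne_zero) hh)
  simp only [this]
  simp

private lemma span_update {l r : ℕ} (a : Fin r → MvPolynomial (Fin l) ℂ)
    (t s : Fin r) (h : MvPolynomial (Fin l) ℂ) (hts : t ≠ s) :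
    Ideal.span (Set.range (Function.update a s (a s + h * a t))) =
      Ideal.span (Set.range a) := by
  classical
  set b := Function.update a s (a s + h * a t) with hb
  have hbt : b t = a t := Function.update_of_ne hts _ _
  have hbs : b s = a s + h * a t := Function.update_self _ _ _
  apply le_antisymm <;> rw [Ideal.span_le] <;> rintro _ ⟨j, rfl⟩
  · rcases eq_or_ne j s with hj | hj
    · rw [hj, hbs]
      exact add_mem (Ideal.subset_span ⟨s, rfl⟩)
        (Ideal.mul_mem_left _ _ (Ideal.subset_span ⟨t, rfl⟩))
    · rw [hb, Function.update_of_ne hj]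
      exact Ideal.subset_span ⟨j, rfl⟩
  · rcases eq_or_ne j s with hj | hj
    · have : a j = b s - h * b t := by rw [hj, hbs, hbt]; ring
      rw [this]
      exact sub_mem (Ideal.subset_span ⟨s, rfl⟩)
        (Ideal.mul_mem_left _ _ (Ideal.subset_span ⟨t, rfl⟩))
    · have : a j = b j := (Function.update_of_ne hj _ _).symm
      rw [this]
      exact Ideal.subset_span ⟨j, rfl⟩

private lemma gen_action {l r : ℕ}
    (τ' : RingAut (MvPolynomial (Fin r) (MvPolynomial (Fin l) ℂ)))
    (hC : ∀ a, τ' (C a) = C a) (t s : Fin r) (h : MvPolynomial (Fin l) ℂ)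
    (hts : t ≠ s) (hXt : τ' (X t) = X t + C h * X s)
    (hXj : ∀ j, j ≠ t → τ' (X j) = X j) (c : Fin r → MvPolynomial (Fin l) ℂ) :
    τ' (∑ j, C (c j) * X j) =
      ∑ j, C (Function.update c s (c s + h * c t) j) * X j := by
  classical
  set b := Function.update c s (c s + h * c t) with hb
  have h1 : τ' (∑ j, C (c j) * X j)
      = ∑ j, (C (c j) * X j + if j = t then C (h * c t) * X s else 0) := by
    rw [map_sum]
    refine Finset.sum_congr rfl fun j _ => ?_
    rw [map_mul, hC]
    by_cases hj : j = t
    · subst hj; rw [hXt, if_pos rfl, map_mul]; ring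
    · rw [hXj j hj, if_neg hj, add_zero]
  have h2 : (∑ j, C (b j) * X j)
      = ∑ j, (C (c j) * X j + if j = s then C (h * c t) * X s else 0) := by
    refine Finset.sum_congr rfl fun j _ => ?_
    by_cases hj : j = s
    · subst hj
      rw [hb, Function.update_self, if_pos rfl, map_add, map_mul]; ring
    · rw [hb, Function.update_of_ne hj, if_neg hj, add_zero]
  rw [h1, h2, Finset.sum_add_distrib, Finset.sum_add_distrib]
  congr 1
  rw [Finset.sum_ite_eq' Finset.univ t, Finset.sum_ite_eq' Finset.univ s]
  simp

/-- Lemma 3.1: In `S = R[y_1,…,y_r]`, `R = ℂ[x_1,…,x_l]`, let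
`ω = σ̂ * τ` where `σ̂` is the lift of an automorphism `σ` of `R` fixing each
`y j`, and `τ` lies in the subgroup generated by the `R`-algebra root
automorphisms `y t ↦ y t + h · y s` (`t ≠ s`, `h ∈ R`) fixing the other `y j`.
If `ω(Σ f j · y j) = Σ g j · y j` then `σ((f_1,…,f_r)) = (g_1,…,g_r)`. -/
theorem stmt10 {l r : ℕ}
    (σ : MvPolynomial (Fin l) ℂ ≃+* MvPolynomial (Fin l) ℂ)
    (σhat ω τ : RingAut (MvPolynomial (Fin r) (MvPolynomial (Fin l) ℂ)))
    (hσhatC : ∀ a, σhat (C a) = C (σ a))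
    (hσhatX : ∀ j, σhat (X j) = X j)
    (hτ : τ ∈ Subgroup.closure
      {τ' : RingAut (MvPolynomial (Fin r) (MvPolynomial (Fin l) ℂ)) |
        (∀ a, τ' (C a) = C a) ∧
        ∃ (t s : Fin r) (h : MvPolynomial (Fin l) ℂ), t ≠ s ∧
          τ' (X t) = X t + C h * X s ∧ ∀ j, j ≠ t → τ' (X j) = X j})
    (hω : ω = σhat * τ)
    (f g : Fin r → MvPolynomial (Fin l) ℂ)
    (hfg : ω (∑ j, C (f j) * X j) = ∑ j, C (g j) * X j) :
    Ideal.map (σ : MvPolynomial (Fin l) ℂ →+* MvPolynomial (Fin l) ℂ)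
        (Ideal.span (Set.range f)) = Ideal.span (Set.range g) := by
  classical
  set Q : RingAut (MvPolynomial (Fin r) (MvPolynomial (Fin l) ℂ)) → Prop :=
    fun τ₀ => ∀ a : Fin r → MvPolynomial (Fin l) ℂ,
      ∃ b, τ₀ (∑ j, C (a j) * X j) = ∑ j, C (b j) * X j ∧
        Ideal.span (Set.range b) = Ideal.span (Set.range a) with hQ
  have key : Q τ ∧ Q τ⁻¹ := by
    refine Subgroup.closure_induction (p := fun x _ => Q x ∧ Q x⁻¹)
      ?_ ?_ ?_ ?_ hτ
    · rintro τ' ⟨hC, t, s, h, hts, hXt, hXj⟩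
      constructor
      · intro a
        exact ⟨_, gen_action τ' hC t s h hts hXt hXj a, span_update a t s h hts⟩
      · intro a
        set b := Function.update a s (a s - h * a t) with hb
        have hbt : b t = a t := Function.update_of_ne hts _ _
        have hab : Function.update b s (b s + h * b t) = a := by
          rw [hbt, hb, Function.update_self]
          rw [Function.update_idem, sub_add_cancel, Function.update_eq_self]
        have := gen_action τ' hC t s h hts hXt hXj b
        rw [hab] at this
        refine ⟨b, ?_, ?_⟩
        · rw [← this]
          show τ'.symm (τ' _) = _
          exact RingEquiv.symm_apply_apply τ' _
        · have : b = Function.update a s (a s + (-h) * a t) := by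
            rw [hb, sub_eq_add_neg, neg_mul]
          rw [this]
          exact span_update a t s (-h) hts
    · constructor <;> intro a <;> exact ⟨a, rfl, rfl⟩
    · rintro x y _ _ ⟨hx, hx'⟩ ⟨hy, hy'⟩
      constructor
      · intro a
        obtain ⟨b, hb1, hb2⟩ := hy a
        obtain ⟨c, hc1, hc2⟩ := hx b
        exact ⟨c, by rw [show (x * y) (∑ j, C (a j) * X j) = x (y (∑ j, C (a j) * X j)) from rfl, hb1, hc1], hc2.trans hb2⟩
      · intro a
        obtain ⟨b, hb1, hb2⟩ := hx' a
        obtain ⟨c, hc1, hc2⟩ := hy' b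
        refine ⟨c, ?_, hc2.trans hb2⟩
        rw [mul_inv_rev]
        rw [show (y⁻¹ * x⁻¹) (∑ j, C (a j) * X j) = y⁻¹ (x⁻¹ (∑ j, C (a j) * X j)) from rfl, hb1, hc1]
    · rintro x _ ⟨hx, hx'⟩
      exact ⟨hx', by simpa using hx⟩
  obtain ⟨b, hb1, hb2⟩ := key.1 f
  have hgb : ∀ j, σ (b j) = g j := by
    intro j
    have : ω (∑ j, C (f j) * X j) = ∑ j, C (σ (b j)) * X j := by
      rw [hω, show (σhat * τ) (∑ j, C (f j) * X j) = σhat (τ (∑ j, C (f j) * X j)) from rfl,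
        hb1, map_sum]
      refine Finset.sum_congr rfl fun j _ => ?_
      rw [map_mul, hσhatC, hσhatX]
    rw [this] at hfg
    have := congrArg (MvPolynomial.coeff (Finsupp.single j 1)) hfg
    rwa [lin_coeff, lin_coeff] at this
  rw [← hb2, Ideal.map_span, ← Set.range_comp]
  congr 1
  ext x
  constructor
  · rintro ⟨j, rfl⟩; exact ⟨j, (hgb j).symm⟩
  · rintro ⟨j, rfl⟩; exact ⟨j, hgb j⟩
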